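/- Consider a finite MDP with state set S, action set A, reward function R with 0 ≤ R ≤ R_max, and discount factor γ ∈ [0,1). Let n : S × A × S → ℕ be visit counts with n(s,a) ≥ m ≥ 1 for all (s,a), let P̂ be the empirical model, let h ∈ ℕ, and let M_h(s,a) be the h-reachable model sets under the sample-mean update rule. Suppose Ṽ satisfies the optimistic Bellman equation Ṽ(s) = max_{a} max_{Q ∈ M_h(s,a)} Σ_{s'} Q(s')·(R(s,a,s') + γ·Ṽ(s')), and V̂ satisfies the Bellman optimality equation for the empirical kernel P̂. Then for every s ∈ S: 0 ≤ Ṽ(s) − V̂(s) ≤ (2h/(m + h)) · R_max/(1−γ)². -/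

import Mathlib

open Finset

/-- The set of h-reachable models at (s,a) under the sample-mean update rule. -/
def reachableModels {S A : Type*} [Fintype S] (n : S → A → S → ℕ) (h : ℕ)
    (s : S) (a : A) : Set (S → ℝ) :=
  {Q | ∃ m' : S → ℕ, (∑ s', m' s') = h ∧
    ∀ s', Q s' = ((n s a s' : ℝ) + (m' s' : ℝ)) / (((∑ s'', n s a s'' : ℕ) : ℝ) + (h : ℝ))}

/-!
The gap `G = Ṽ - V̂` is controlled by a single Bellman step taken at an extremal state of `G`.
For the lower bound, putting all `h` pseudo-samples on the best successor yields a model in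
`M_h(s,a)` that is at least as good as `P̂(s,a)`, so `G ≥ γ · min G`, whence `G ≥ 0`.
For the upper bound, a model in `M_h(s,a)` is `(n(s,a) · P̂(s,a) + m') / (n(s,a) + h)`, and since
`0 ≤ R + γ Ṽ ≤ R_max / (1 - γ)` the extra mass `m'` adds at most `h / (m + h) · R_max / (1 - γ)`;
so `G ≤ h / (m + h) · R_max / (1 - γ) + γ · max G`, whence `G ≤ h / (m + h) · R_max / (1 - γ)²`.
-/

section WeightedSum

variable {S : Type*} [Fintype S] {Q g g' : S → ℝ} {c : ℝ}

theorem sum_mul_le_sum_mul_add (hQ : ∀ s, 0 ≤ Q s) (hQ1 : ∑ s, Q s = 1)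
    (hg : ∀ s, g s ≤ g' s + c) : ∑ s, Q s * g s ≤ ∑ s, Q s * g' s + c :=
  calc ∑ s, Q s * g s ≤ ∑ s, Q s * (g' s + c) :=
        sum_le_sum fun s _ => mul_le_mul_of_nonneg_left (hg s) (hQ s)
    _ = ∑ s, Q s * g' s + c := by simp only [mul_add, sum_add_distrib, ← sum_mul, hQ1, one_mul]

theorem sum_mul_add_le_sum_mul (hQ : ∀ s, 0 ≤ Q s) (hQ1 : ∑ s, Q s = 1)
    (hg : ∀ s, g s + c ≤ g' s) : ∑ s, Q s * g s + c ≤ ∑ s, Q s * g' s :=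
  calc ∑ s, Q s * g s + c = ∑ s, Q s * (g s + c) := by
        simp only [mul_add, sum_add_distrib, ← sum_mul, hQ1, one_mul]
    _ ≤ ∑ s, Q s * g' s := sum_le_sum fun s _ => mul_le_mul_of_nonneg_left (hg s) (hQ s)

theorem sum_mul_le_of_le (hQ : ∀ s, 0 ≤ Q s) (hQ1 : ∑ s, Q s = 1) (hg : ∀ s, g s ≤ c) :
    ∑ s, Q s * g s ≤ c := by
  simpa using sum_mul_le_sum_mul_add (g' := 0) hQ hQ1 (by simpa using hg)

theorem le_sum_mul_of_le (hQ : ∀ s, 0 ≤ Q s) (hQ1 : ∑ s, Q s = 1) (hg : ∀ s, c ≤ g s) :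
    c ≤ ∑ s, Q s * g s := by
  simpa using sum_mul_add_le_sum_mul (g := 0) hQ hQ1 (by simpa using hg)

end WeightedSum

section FixedPoint

variable {S : Type*} [Fintype S] [Nonempty S] {f : S → ℝ} {c γ : ℝ}

theorem le_div_one_sub_of_le_add_mul_sup' (hγ : γ < 1)
    (hf : ∀ s, f s ≤ c + γ * univ.sup' univ_nonempty f) (s : S) : f s ≤ c / (1 - γ) := by
  have hsup : univ.sup' univ_nonempty f ≤ c + γ * univ.sup' univ_nonempty f :=
    sup'_le _ _ fun s _ => hf s
  rw [le_div_iff₀ (sub_pos.2 hγ)]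
  nlinarith [le_sup' f (mem_univ s)]

theorem div_one_sub_le_of_add_mul_inf'_le (hγ : γ < 1)
    (hf : ∀ s, c + γ * univ.inf' univ_nonempty f ≤ f s) (s : S) : c / (1 - γ) ≤ f s := by
  have hinf : c + γ * univ.inf' univ_nonempty f ≤ univ.inf' univ_nonempty f :=
    le_inf' _ _ fun s _ => hf s
  rw [div_le_iff₀ (sub_pos.2 hγ)]
  nlinarith [inf'_le f (mem_univ s)]

end FixedPoint

section Models

variable {S A : Type*} [Fintype S] {n : S → A → S → ℕ} {h : ℕ} {s : S} {a : A} {Q : S → ℝ}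

noncomputable def empiricalModel (n : S → A → S → ℕ) (s : S) (a : A) (s' : S) : ℝ :=
  n s a s' / ((∑ s'', n s a s'' : ℕ) : ℝ)

theorem empiricalModel_nonneg (s' : S) : 0 ≤ empiricalModel n s a s' := by
  unfold empiricalModel; positivity

theorem sum_empiricalModel (hN : 0 < ∑ s', n s a s') : ∑ s', empiricalModel n s a s' = 1 := by
  simp only [empiricalModel]
  rw [← sum_div, ← Nat.cast_sum, div_self (by positivity)]

theorem sum_empiricalModel_mul (f : S → ℝ) :
    ∑ s', empiricalModel n s a s' * f s' =
      (∑ s', (n s a s' : ℝ) * f s') / ((∑ s'', n s a s'' : ℕ) : ℝ) := by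
  simp only [empiricalModel, sum_div, div_mul_eq_mul_div]

theorem nonneg_of_mem_reachableModels (hQ : Q ∈ reachableModels n h s a) (s' : S) : 0 ≤ Q s' := by
  obtain ⟨m', -, hQ⟩ := hQ
  rw [hQ s']
  positivity

theorem sum_mul_of_mem_reachableModels {m' : S → ℕ}
    (hQ : ∀ s', Q s' = ((n s a s' : ℝ) + (m' s' : ℝ)) / (((∑ s'', n s a s'' : ℕ) : ℝ) + (h : ℝ)))
    (f : S → ℝ) :
    ∑ s', Q s' * f s' = (∑ s', (n s a s' : ℝ) * f s' + ∑ s', (m' s' : ℝ) * f s') /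
      (((∑ s'', n s a s'' : ℕ) : ℝ) + (h : ℝ)) := by
  simp only [hQ, ← sum_add_distrib, sum_div, div_mul_eq_mul_div, add_mul]

theorem sum_eq_one_of_mem_reachableModels (hN : 0 < ∑ s', n s a s')
    (hQ : Q ∈ reachableModels n h s a) : ∑ s', Q s' = 1 := by
  obtain ⟨m', hm', hQ⟩ := hQ
  have := sum_mul_of_mem_reachableModels hQ 1
  simp only [Pi.one_apply, mul_one] at this
  rw [this, ← Nat.cast_sum, ← Nat.cast_sum, hm', div_self (by positivity)]

theorem exists_mem_reachableModels_sum_empiricalModel_mul_le [Nonempty S]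
    (hN : 0 < ∑ s', n s a s') (f : S → ℝ) :
    ∃ Q ∈ reachableModels n h s a,
      ∑ s', empiricalModel n s a s' * f s' ≤ ∑ s', Q s' * f s' := by
  classical
  obtain ⟨t, -, ht⟩ := exists_max_image univ f univ_nonempty
  refine ⟨_, ⟨(Pi.single t h : S → ℕ), by simp, fun s' => rfl⟩, ?_⟩
  have hcount_le : ∑ s', (n s a s' : ℝ) * f s' ≤ ((∑ s'', n s a s'' : ℕ) : ℝ) * f t := by
    rw [Nat.cast_sum, sum_mul]
    exact sum_le_sum fun s' _ => mul_le_mul_of_nonneg_left (ht s' (mem_univ _)) (Nat.cast_nonneg _)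
  have hextra : ∑ s', (((Pi.single t h : S → ℕ) s' : ℕ) : ℝ) * f s' = h * f t := by
    simp [Pi.single_apply]
  rw [sum_empiricalModel_mul, sum_mul_of_mem_reachableModels (fun s' => rfl), hextra,
    div_le_div_iff₀ (by positivity) (by positivity)]
  nlinarith [mul_le_mul_of_nonneg_left hcount_le (Nat.cast_nonneg (α := ℝ) h)]

theorem sum_mul_le_sum_empiricalModel_mul_add {Q f : S → ℝ} {B : ℝ} (hN : 0 < ∑ s', n s a s')
    (hQ : Q ∈ reachableModels n h s a) (hf0 : ∀ s', 0 ≤ f s') (hfB : ∀ s', f s' ≤ B) :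
    ∑ s', Q s' * f s' ≤
      ∑ s', empiricalModel n s a s' * f s' + h / (((∑ s'', n s a s'' : ℕ) : ℝ) + h) * B := by
  obtain ⟨m', hm', hQ⟩ := hQ
  have hextra : ∑ s', (m' s' : ℝ) * f s' ≤ h * B :=
    calc ∑ s', (m' s' : ℝ) * f s' ≤ ∑ s', (m' s' : ℝ) * B :=
          sum_le_sum fun s' _ => mul_le_mul_of_nonneg_left (hfB s') (Nat.cast_nonneg _)
      _ = h * B := by rw [← sum_mul, ← Nat.cast_sum, hm']
  rw [sum_mul_of_mem_reachableModels hQ, add_div, sum_empiricalModel_mul, div_mul_eq_mul_div]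
  have hNpos : (0 : ℝ) < ((∑ s'', n s a s'' : ℕ) : ℝ) := by exact_mod_cast hN
  gcongr
  · exact sum_nonneg fun s' _ => mul_nonneg (Nat.cast_nonneg _) (hf0 s')
  · exact le_add_of_nonneg_right (Nat.cast_nonneg _)

end Models

section Values

variable {S A : Type*} [Fintype S]

def IsOptimisticValue (R : S → A → S → ℝ) (γ : ℝ) (n : S → A → S → ℕ) (h : ℕ) (V : S → ℝ) :
    Prop :=
  ∀ s, IsGreatest {x : ℝ | ∃ a : A, ∃ Q ∈ reachableModels n h s a,
    x = ∑ s', Q s' * (R s a s' + γ * V s')} (V s)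

def IsBellmanOptimal [Fintype A] [Nonempty A] (P : S → A → S → ℝ) (R : S → A → S → ℝ) (γ : ℝ)
    (V : S → ℝ) : Prop :=
  ∀ s, V s = univ.sup' univ_nonempty (fun a => ∑ s', P s a s' * (R s a s' + γ * V s'))

variable [Nonempty S] {R : S → A → S → ℝ} {R_max γ : ℝ} {n : S → A → S → ℕ} {h : ℕ}
  {Vtilde Vhat : S → ℝ}

namespace IsOptimisticValue

theorem nonneg (hV : IsOptimisticValue R γ n h Vtilde) (hR : ∀ s a s', 0 ≤ R s a s')
    (hγ0 : 0 ≤ γ) (hγ1 : γ < 1) (hN : ∀ s a, 0 < ∑ s', n s a s') (s : S) : 0 ≤ Vtilde s := by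
  suffices ∀ s, 0 + γ * univ.inf' univ_nonempty Vtilde ≤ Vtilde s by
    simpa using div_one_sub_le_of_add_mul_inf'_le hγ1 this s
  intro s
  obtain ⟨a, Q, hQ, hVs⟩ := (hV s).1
  rw [hVs, zero_add]
  exact le_sum_mul_of_le (nonneg_of_mem_reachableModels hQ)
    (sum_eq_one_of_mem_reachableModels (hN s a) hQ) fun s' =>
      le_add_of_nonneg_of_le (hR s a s') (mul_le_mul_of_nonneg_left (inf'_le _ (mem_univ s')) hγ0)

theorem le (hV : IsOptimisticValue R γ n h Vtilde) (hR : ∀ s a s', R s a s' ≤ R_max)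
    (hγ0 : 0 ≤ γ) (hγ1 : γ < 1) (hN : ∀ s a, 0 < ∑ s', n s a s') (s : S) :
    Vtilde s ≤ R_max / (1 - γ) := by
  refine le_div_one_sub_of_le_add_mul_sup' hγ1 (fun s => ?_) s
  obtain ⟨a, Q, hQ, hVs⟩ := (hV s).1
  rw [hVs]
  exact sum_mul_le_of_le (nonneg_of_mem_reachableModels hQ)
    (sum_eq_one_of_mem_reachableModels (hN s a) hQ) fun s' =>
      add_le_add (hR s a s') (mul_le_mul_of_nonneg_left (le_sup' _ (mem_univ s')) hγ0)

theorem reward_add_mul_mem_Icc (hV : IsOptimisticValue R γ n h Vtilde)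
    (hR : ∀ s a s', 0 ≤ R s a s' ∧ R s a s' ≤ R_max) (hγ0 : 0 ≤ γ) (hγ1 : γ < 1)
    (hN : ∀ s a, 0 < ∑ s', n s a s') (s : S) (a : A) (s' : S) :
    R s a s' + γ * Vtilde s' ∈ Set.Icc 0 (R_max / (1 - γ)) := by
  refine ⟨add_nonneg (hR s a s').1
    (mul_nonneg hγ0 (hV.nonneg (fun s a s' => (hR s a s').1) hγ0 hγ1 hN s')), ?_⟩
  calc R s a s' + γ * Vtilde s' ≤ R_max + γ * (R_max / (1 - γ)) := add_le_add (hR s a s').2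
        (mul_le_mul_of_nonneg_left (hV.le (fun s a s' => (hR s a s').2) hγ0 hγ1 hN s') hγ0)
    _ = R_max / (1 - γ) := by field_simp [(sub_pos.2 hγ1).ne']; ring

end IsOptimisticValue

variable [Fintype A] [Nonempty A]

theorem le_of_isOptimisticValue_of_isBellmanOptimal (hVt : IsOptimisticValue R γ n h Vtilde)
    (hVh : IsBellmanOptimal (empiricalModel n) R γ Vhat) (hγ0 : 0 ≤ γ) (hγ1 : γ < 1)
    (hN : ∀ s a, 0 < ∑ s', n s a s') (s : S) : Vhat s ≤ Vtilde s := by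
  set G : S → ℝ := fun s => Vtilde s - Vhat s
  suffices ∀ s, 0 + γ * univ.inf' univ_nonempty G ≤ G s by
    simpa [G] using div_one_sub_le_of_add_mul_inf'_le hγ1 this s
  intro s
  rw [zero_add, le_sub_comm, hVh s]
  refine sup'_le _ _ fun a _ => le_sub_iff_add_le.2 ?_
  obtain ⟨Q, hQ, hle⟩ := exists_mem_reachableModels_sum_empiricalModel_mul_le (h := h) (hN s a)
    (fun s' => R s a s' + γ * Vtilde s')
  calc ∑ s', empiricalModel n s a s' * (R s a s' + γ * Vhat s') + γ * univ.inf' univ_nonempty G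
      ≤ ∑ s', empiricalModel n s a s' * (R s a s' + γ * Vtilde s') :=
        sum_mul_add_le_sum_mul empiricalModel_nonneg (sum_empiricalModel (hN s a)) fun s' => by
          have := mul_le_mul_of_nonneg_left (inf'_le G (mem_univ s')) hγ0
          simp only [G] at this
          linarith
    _ ≤ ∑ s', Q s' * (R s a s' + γ * Vtilde s') := hle
    _ ≤ Vtilde s := (hVt s).2 ⟨a, Q, hQ, rfl⟩

theorem sub_le_of_isOptimisticValue_of_isBellmanOptimal (hVt : IsOptimisticValue R γ n h Vtilde)
    (hVh : IsBellmanOptimal (empiricalModel n) R γ Vhat)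
    (hR : ∀ s a s', 0 ≤ R s a s' ∧ R s a s' ≤ R_max) (hγ0 : 0 ≤ γ) (hγ1 : γ < 1) {m : ℕ}
    (hm : 0 < m) (hn : ∀ s a, m ≤ ∑ s', n s a s') (s : S) :
    Vtilde s - Vhat s ≤ h / (m + h) * R_max / (1 - γ) ^ 2 := by
  have hN : ∀ s a, 0 < ∑ s', n s a s' := fun s a => hm.trans_le (hn s a)
  set B := R_max / (1 - γ) with hB_def
  set G : S → ℝ := fun s => Vtilde s - Vhat s
  have hf := hVt.reward_add_mul_mem_Icc hR hγ0 hγ1 hN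
  have hgap : ∀ s, G s ≤ h / (m + h) * B + γ * univ.sup' univ_nonempty G := by
    intro s
    obtain ⟨a, Q, hQ, hVs⟩ := (hVt s).1
    have hB : 0 ≤ B := (hf s a s).1.trans (hf s a s).2
    have hcount : (h : ℝ) / (((∑ s'', n s a s'' : ℕ) : ℝ) + h) ≤ h / (m + h) := by
      gcongr
      exact_mod_cast hn s a
    have hVhs : ∑ s', empiricalModel n s a s' * (R s a s' + γ * Vhat s') ≤ Vhat s := by
      rw [hVh s]
      exact le_sup' (fun a => ∑ s', empiricalModel n s a s' * (R s a s' + γ * Vhat s')) (mem_univ a)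
    have hshift : ∑ s', empiricalModel n s a s' * (R s a s' + γ * Vtilde s') ≤
        ∑ s', empiricalModel n s a s' * (R s a s' + γ * Vhat s') +
          γ * univ.sup' univ_nonempty G :=
      sum_mul_le_sum_mul_add empiricalModel_nonneg (sum_empiricalModel (hN s a)) fun s' => by
        have := mul_le_mul_of_nonneg_left (le_sup' G (mem_univ s')) hγ0
        simp only [G] at this
        linarith
    have hsplit := sum_mul_le_sum_empiricalModel_mul_add (hN s a) hQ (fun s' => (hf s a s').1)
      fun s' => (hf s a s').2
    have hbonus := mul_le_mul_of_nonneg_right hcount hB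
    simp only [G]
    linarith
  calc Vtilde s - Vhat s ≤ h / (m + h) * B / (1 - γ) := le_div_one_sub_of_le_add_mul_sup' hγ1 hgap s
    _ = h / (m + h) * R_max / (1 - γ) ^ 2 := by rw [hB_def, ← mul_div_assoc, div_div, ← sq]

end Values

theorem optimistic_value_gap_general {S A : Type*} [Fintype S] [Fintype A] [Nonempty S] [Nonempty A]
    (R : S → A → S → ℝ) (R_max : ℝ)
    (hR : ∀ s a s', 0 ≤ R s a s' ∧ R s a s' ≤ R_max)
    (γ : ℝ) (hγ : γ ∈ Set.Ico (0 : ℝ) 1)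
    (n : S → A → S → ℕ) (m : ℕ) (hm : 1 ≤ m)
    (hn : ∀ s a, m ≤ ∑ s', n s a s') (h : ℕ)
    (Vtilde : S → ℝ)
    (hopt : ∀ s, IsGreatest
      {x : ℝ | ∃ a : A, ∃ Q ∈ reachableModels n h s a,
        x = ∑ s', Q s' * (R s a s' + γ * Vtilde s')} (Vtilde s))
    (Vhat : S → ℝ)
    (hbell : ∀ s, Vhat s =
      univ.sup' univ_nonempty (fun a => ∑ s',
        ((n s a s' : ℝ) / ((∑ s'', n s a s'' : ℕ) : ℝ)) * (R s a s' + γ * Vhat s'))) :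
    ∀ s, 0 ≤ Vtilde s - Vhat s ∧
      Vtilde s - Vhat s ≤ (2 * (h : ℝ) / ((m : ℝ) + (h : ℝ))) * R_max / (1 - γ) ^ 2 := by
  obtain ⟨hγ0, hγ1⟩ := hγ
  have hVt : IsOptimisticValue R γ n h Vtilde := hopt
  have hVh : IsBellmanOptimal (empiricalModel n) R γ Vhat := hbell
  have hN : ∀ s a, 0 < ∑ s', n s a s' := fun s a => hm.trans (hn s a)
  intro s
  have hlower : 0 ≤ Vtilde s - Vhat s :=
    sub_nonneg.2 (le_of_isOptimisticValue_of_isBellmanOptimal hVt hVh hγ0 hγ1 hN s)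
  have hupper := sub_le_of_isOptimisticValue_of_isBellmanOptimal hVt hVh hR hγ0 hγ1 hm hn s
  refine ⟨hlower, hupper.trans ?_⟩
  have hdouble : 2 * (h : ℝ) / (m + h) * R_max / (1 - γ) ^ 2 =
      2 * (h / (m + h) * R_max / (1 - γ) ^ 2) := by ring
  linarith

/-- The internal optimistic value Ṽ of Algorithm 1 and the estimated value V̂ (the optimal
value of the empirical model) satisfy 0 ≤ Ṽ(s) − V̂(s) ≤ (2h/(m+h))·R_max/(1−γ)² once
every state-action pair has at least m samples. -/
theorem optimistic_value_gap {S A : Type*} [Fintype S] [Fintype A] [Nonempty S] [Nonempty A]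
    (R : S → A → S → ℝ) (R_max : ℝ) (hRmax : 0 < R_max)
    (hR : ∀ s a s', 0 ≤ R s a s' ∧ R s a s' ≤ R_max)
    (γ : ℝ) (hγ : γ ∈ Set.Ico (0 : ℝ) 1)
    (n : S → A → S → ℕ) (m : ℕ) (hm : 1 ≤ m)
    (hn : ∀ s a, m ≤ ∑ s', n s a s') (h : ℕ)
    (Vtilde : S → ℝ)
    (hopt : ∀ s, IsGreatest
      {x : ℝ | ∃ a : A, ∃ Q ∈ reachableModels n h s a,
        x = ∑ s', Q s' * (R s a s' + γ * Vtilde s')} (Vtilde s))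
    (Vhat : S → ℝ)
    (hbell : ∀ s, Vhat s =
      univ.sup' univ_nonempty (fun a => ∑ s',
        ((n s a s' : ℝ) / ((∑ s'', n s a s'' : ℕ) : ℝ)) * (R s a s' + γ * Vhat s'))) :
    ∀ s, 0 ≤ Vtilde s - Vhat s ∧
      Vtilde s - Vhat s ≤ (2 * (h : ℝ) / ((m : ℝ) + (h : ℝ))) * R_max / (1 - γ) ^ 2 :=
  optimistic_value_gap_general R R_max hR γ hγ n m hm hn h Vtilde hopt Vhat hbell
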